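/- Every fs-module with finite hollow dimension is Artinian and Noetherian, hence has finite length; moreover Rad(M) is finitely generated and M has finite Goldie dimension. -/

import Mathlib

/-- A submodule `N` of `M` is small (superfluous): `N + A = M` implies `A = M`. -/
def IsSmallSubmodule {R M : Type*} [Ring R] [AddCommGroup M] [Module R M]
    (N : Submodule R M) : Prop :=
  ∀ A : Submodule R M, N ⊔ A = ⊤ → A = ⊤

/-- `M` is an fs-module: it has only finitely many small submodules. -/
def IsFsModule (R M : Type*) [Ring R] [AddCommGroup M] [Module R M] : Prop :=
  {N : Submodule R M | IsSmallSubmodule N}.Finite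

/-- The radical of `M`, as the sum of all small submodules of `M`. -/
def modRad (R M : Type*) [Ring R] [AddCommGroup M] [Module R M] : Submodule R M :=
  sSup {N : Submodule R M | IsSmallSubmodule N}

/-- The radical of `M`, as the intersection of all maximal submodules of `M`. -/
def modRad' (R M : Type*) [Ring R] [AddCommGroup M] [Module R M] : Submodule R M :=
  sInf {N : Submodule R M | IsCoatom N}

/-- The socle of `M`: the sum of all minimal (simple) submodules of `M`. -/
def modSoc (R M : Type*) [Ring R] [AddCommGroup M] [Module R M] : Submodule R M :=
  sSup {N : Submodule R M | IsAtom N}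

/-- `M` has finite hollow dimension: for every descending chain `N₁ ⊇ N₂ ⊇ ⋯`
there is `n` such that `Nₙ / N_k` is small in `M / N_k` for all `k ≥ n`. -/
def HasFiniteHollowDim (R M : Type*) [Ring R] [AddCommGroup M] [Module R M] : Prop :=
  ∀ N : ℕ → Submodule R M, (∀ i j, i ≤ j → N j ≤ N i) →
    ∃ n, ∀ k, n ≤ k → IsSmallSubmodule (Submodule.map (N k).mkQ (N n))

/-- `M` has finite Goldie dimension: it contains no infinite direct sum of
nonzero submodules. -/
def HasFiniteGoldieDim (R M : Type*) [Ring R] [AddCommGroup M] [Module R M] : Prop :=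
  ¬ ∃ f : ℕ → Submodule R M, (∀ i, f i ≠ ⊥) ∧ iSupIndep f

/-!
The radical is the sum of the finitely many small submodules, hence small itself, so every
submodule of `Rad M` is small and `Rad M` has only finitely many submodules: it has finite length.
Finite hollow dimension makes every submodule weakly supplemented, and a weak supplement of
`N ⊇ Rad M` gives a complement of `N / Rad M`, so `M / Rad M` is semisimple. Small submodules of
semisimple modules vanish, so on `M / Rad M` the hollow-dimension condition becomes the descending
chain condition; a semisimple Artinian module is Noetherian. Both chain conditions then extend
from `Rad M` and `M / Rad M` to `M`.
-/

def IsWeaklySupplemented (R M : Type*) [Ring R] [AddCommGroup M] [Module R M] : Prop :=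
  ∀ N : Submodule R M, ∃ K : Submodule R M, N ⊔ K = ⊤ ∧ IsSmallSubmodule (N ⊓ K)

section FsModule

variable {R M : Type*} [Ring R] [AddCommGroup M] [Module R M]

theorem IsSmallSubmodule.mono {N N' : Submodule R M} (h : IsSmallSubmodule N) (h' : N' ≤ N) :
    IsSmallSubmodule N' := fun A hA =>
  h A (top_unique (hA.ge.trans (sup_le_sup_right h' A)))

theorem IsSmallSubmodule.le_modRad {N : Submodule R M} (h : IsSmallSubmodule N) :
    N ≤ modRad R M :=
  le_sSup h

theorem IsSmallSubmodule.eq_bot [IsSemisimpleModule R M] {N : Submodule R M}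
    (h : IsSmallSubmodule N) : N = ⊥ := by
  obtain ⟨C, hC⟩ := exists_isCompl N
  have hC_top : C = ⊤ := h C hC.sup_eq_top
  simpa only [hC_top, inf_top_eq] using hC.inf_eq_bot

theorem sup_eq_top_of_isSmallSubmodule_map_mkQ {K L A : Submodule R M}
    (h : IsSmallSubmodule (L.map K.mkQ)) (hA : L ⊔ A = ⊤) : K ⊔ A = ⊤ := by
  have hmap : L.map K.mkQ ⊔ A.map K.mkQ = ⊤ := by
    rw [← Submodule.map_sup, hA, Submodule.map_top, Submodule.range_mkQ]
  simpa only [Submodule.comap_map_mkQ, Submodule.comap_top] using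
    congrArg (Submodule.comap K.mkQ) (h _ hmap)

theorem isSmallSubmodule_sSup {s : Set (Submodule R M)} (hs : s.Finite)
    (h : ∀ N ∈ s, IsSmallSubmodule N) : IsSmallSubmodule (sSup s) := by
  have hsup : SupClosed {N : Submodule R M | IsSmallSubmodule N} := fun N₁ h₁ N₂ h₂ A hA =>
    h₂ A (h₁ _ (by rwa [← sup_assoc]))
  exact hsup.sSup_mem hs (fun A hA => bot_sup_eq A ▸ hA) h

theorem IsFsModule.isSmallSubmodule_modRad (hfs : IsFsModule R M) :
    IsSmallSubmodule (modRad R M) :=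
  isSmallSubmodule_sSup hfs fun _ hN => hN

theorem IsFsModule.finite_submodule_modRad (hfs : IsFsModule R M) :
    Finite (Submodule R (modRad R M)) := by
  have := hfs.to_subtype
  exact Finite.of_injective (β := {N : Submodule R M | IsSmallSubmodule N})
    (fun P => ⟨P.map (modRad R M).subtype,
      hfs.isSmallSubmodule_modRad.mono (Submodule.map_subtype_le _ P)⟩)
    fun _ _ h => Submodule.map_injective_of_injective (modRad R M).injective_subtype
      (congrArg Subtype.val h)

theorem exists_ne_top_sup_eq_top_of_not_isSmallSubmodule_inf {N K : Submodule R M}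
    (hNK : N ⊔ K = ⊤) (hs : ¬IsSmallSubmodule (N ⊓ K)) :
    ∃ B ≠ ⊤, K ⊔ B = ⊤ ∧ N ⊔ K ⊓ B = ⊤ := by
  simp only [IsSmallSubmodule, not_forall] at hs
  obtain ⟨B, hB, hB_ne⟩ := hs
  refine ⟨B, hB_ne, top_unique (hB.ge.trans (sup_le_sup_right inf_le_right B)), ?_⟩
  have hK : K = N ⊓ K ⊔ K ⊓ B := by
    rw [inf_comm K B, ← sup_inf_assoc_of_le B inf_le_right, hB, top_inf_eq]
  calc N ⊔ K ⊓ B = N ⊔ (N ⊓ K ⊔ K ⊓ B) := by rw [← sup_assoc, sup_inf_self]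
    _ = ⊤ := hK ▸ hNK

theorem HasFiniteHollowDim.isWeaklySupplemented (hh : HasFiniteHollowDim R M) :
    IsWeaklySupplemented R M := by
  intro N
  by_contra! hN
  choose B hB_ne hKB hNKB using fun K : {K : Submodule R M // N ⊔ K = ⊤} =>
    exists_ne_top_sup_eq_top_of_not_isSmallSubmodule_inf K.2 (hN K K.2)
  -- `K (i + 1) = K i ⊓ B (K i)`; finite hollow dimension forces some `B (K n)` to be `⊤`.
  let next (K : {K : Submodule R M // N ⊔ K = ⊤}) : {K : Submodule R M // N ⊔ K = ⊤} :=
    ⟨K.1 ⊓ B K, hNKB K⟩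
  let K (i : ℕ) := next^[i] ⟨⊤, sup_top_eq N⟩
  have hK_succ (i : ℕ) : (K (i + 1)).1 = (K i).1 ⊓ B (K i) := by
    simp only [K, Function.iterate_succ_apply']; rfl
  have hK : Antitone fun i => (K i).1 :=
    antitone_nat_of_succ_le fun i => hK_succ i ▸ inf_le_left
  obtain ⟨n, hn⟩ := hh _ fun i j hij => hK hij
  have hsup := sup_eq_top_of_isSmallSubmodule_map_mkQ (hn (n + 1) n.le_succ) (hKB (K n))
  rw [sup_eq_right.mpr (show (K (n + 1)).1 ≤ _ from hK_succ n ▸ inf_le_right)] at hsup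
  exact hB_ne (K n) hsup

theorem IsWeaklySupplemented.isSemisimpleModule_quotient_modRad (h : IsWeaklySupplemented R M) :
    IsSemisimpleModule R (M ⧸ modRad R M) := by
  refine { exists_isCompl := fun P => ?_ }
  obtain ⟨K, hPK, hPK_small⟩ := h (P.comap (modRad R M).mkQ)
  refine ⟨K.map (modRad R M).mkQ, disjoint_iff.mpr ?_, codisjoint_iff.mpr ?_⟩
  · apply Submodule.comap_injective_of_surjective (modRad R M).mkQ_surjective
    rw [Submodule.comap_inf, Submodule.comap_map_mkQ, Submodule.comap_bot, Submodule.ker_mkQ,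
      sup_comm, ← inf_sup_assoc_of_le _ (Submodule.le_comap_mkQ _ P)]
    exact sup_eq_right.mpr hPK_small.le_modRad
  · rw [← Submodule.map_comap_eq_of_surjective (modRad R M).mkQ_surjective P, ← Submodule.map_sup,
      hPK, Submodule.map_top, Submodule.range_mkQ]

theorem HasFiniteHollowDim.isArtinian_quotient (hh : HasFiniteHollowDim R M) (N : Submodule R M)
    [IsSemisimpleModule R (M ⧸ N)] : IsArtinian R (M ⧸ N) := by
  refine monotone_stabilizes_iff_artinian.mp fun P => ?_
  let c (i : ℕ) : Submodule R M := (P i).ofDual.comap N.mkQ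
  obtain ⟨n, hn⟩ := hh c fun i j hij => Submodule.comap_mono (P.monotone hij)
  refine ⟨n, fun k hk => le_antisymm (P.monotone hk) ?_⟩
  have : IsSemisimpleModule R (M ⧸ c k) :=
    .of_surjective _ (Submodule.factor_surjective (Submodule.le_comap_mkQ N (P k).ofDual))
  have hck : c n ≤ c k := by
    simpa only [Submodule.ker_mkQ] using LinearMap.le_ker_iff_map.mpr (hn k hk).eq_bot
  exact (Submodule.comap_le_comap_iff_of_surjective N.mkQ_surjective).mp hck

theorem hasFiniteGoldieDim_of_isNoetherian [IsNoetherian R M] : HasFiniteGoldieDim R M :=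
  fun ⟨_, hf, hind⟩ => Infinite.not_finite (WellFoundedGT.finite_of_iSupIndep hind hf)

end FsModule

theorem fs_finite_hollow_structure (R M : Type*) [Ring R] [AddCommGroup M] [Module R M]
    (hfs : IsFsModule R M) (hh : HasFiniteHollowDim R M) :
    IsArtinian R M ∧ IsNoetherian R M ∧ IsFiniteLength R M ∧
      (modRad R M).FG ∧ HasFiniteGoldieDim R M := by
  have := hfs.finite_submodule_modRad
  have : IsNoetherian R (modRad R M) := isNoetherian_iff'.mpr inferInstance
  have := hh.isWeaklySupplemented.isSemisimpleModule_quotient_modRad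
  have := hh.isArtinian_quotient (modRad R M)
  have : IsNoetherian R (M ⧸ modRad R M) := (IsSemisimpleModule.finite_tfae.out 2 1).mp ‹_›
  have hart : IsArtinian R M :=
    (isArtinian_iff_submodule_quotient (modRad R M)).mpr ⟨inferInstance, inferInstance⟩
  have hnoeth : IsNoetherian R M :=
    (isNoetherian_iff_submodule_quotient (modRad R M)).mpr ⟨inferInstance, inferInstance⟩
  exact ⟨hart, hnoeth, isFiniteLength_iff_isNoetherian_isArtinian.mpr ⟨hnoeth, hart⟩,
    IsNoetherian.noetherian _, hasFiniteGoldieDim_of_isNoetherian⟩
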